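/- Suppose W isolates the minimum-weight matching M_k of size k. Then W isolates a matching of size k+1 (i.e., there is a unique minimum-weight matching of size k+1) if and only if there is a unique minimum-alternating-weight augmenting path with respect to M_k. -/

import Mathlib

/-!
For an augmenting path `P` with respect to `Mk`, the set `Mk ∆ P` is a matching of size
`k + 1` and weight `wt Mk + altWeight P`. Conversely, a matching `M` of size `k + 1` contains an
augmenting path `P ⊆ M ∆ Mk`: start at a vertex covered by `M` but not by `Mk`, remove its
`M`-edge and the `Mk`-edge that follows, and induct on `|Mk|`. Then `M ∆ P` is a matching of
size `k` and `wt (M ∆ P) + wt (Mk ∆ P) = wt M + wt Mk`, so, `Mk` being isolated, either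
`M = Mk ∆ P` or `Mk ∆ P` is strictly lighter than `M`. Hence the minimum-weight matchings of
size `k + 1` are exactly the sets `Mk ∆ P` with `P` a minimum augmenting path, and
`P ↦ Mk ∆ P` is injective.
-/

variable {V : Type*} [DecidableEq V]

/-- `M` is a matching in the graph with edge set `E`: a set of edges of `E`
such that no two distinct edges share a vertex. -/
def IsMatching (E M : Finset (Sym2 V)) : Prop :=
  M ⊆ E ∧ ∀ e ∈ M, ∀ f ∈ M, e ≠ f → ∀ v, v ∈ e → v ∉ f

/-- The list of edges of the path given by the vertex list `l`. -/
def pathEdges (l : List V) : List (Sym2 V) :=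
  (l.zip l.tail).map fun p => s(p.1, p.2)

/-- `l` is (the vertex list of) an augmenting path with respect to the matching `M` in the
graph with edge set `E`: a path (distinct vertices, consecutive pairs forming edges of `E`)
with an odd number of edges, alternating between edges outside `M` (the even-indexed, in
particular the first and last) and edges of `M` (the odd-indexed), whose two endpoints are
unmatched by `M`. -/
def IsAugPath (E M : Finset (Sym2 V)) (l : List V) : Prop :=
  2 ≤ l.length ∧ l.Nodup ∧
    (∀ e ∈ pathEdges l, e ∈ E) ∧
    (pathEdges l).length % 2 = 1 ∧
    (∀ i (h : i < (pathEdges l).length), ((pathEdges l)[i] ∈ M ↔ i % 2 = 1)) ∧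
    (∀ e ∈ M, (∀ a, l.head? = some a → a ∉ e) ∧ (∀ a, l.getLast? = some a → a ∉ e))

/-- The weight of a set of edges. -/
def wt (W : Sym2 V → ℤ) (F : Finset (Sym2 V)) : ℤ := ∑ e ∈ F, W e

/-- `W` isolates the matching `M` of size `k`: `M` is a matching of size `k` and every
other matching of size `k` has strictly larger weight. -/
def Isolates (W : Sym2 V → ℤ) (E : Finset (Sym2 V)) (k : ℕ) (M : Finset (Sym2 V)) : Prop :=
  IsMatching E M ∧ M.card = k ∧
    ∀ M', IsMatching E M' → M'.card = k → M' ≠ M → wt W M < wt W M'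

/-- `M` is a minimum-weight matching of size `j`. -/
def MinOfSize (W : Sym2 V → ℤ) (E : Finset (Sym2 V)) (j : ℕ) (M : Finset (Sym2 V)) : Prop :=
  IsMatching E M ∧ M.card = j ∧
    ∀ M', IsMatching E M' → M'.card = j → wt W M ≤ wt W M'

/-- The edge set `E` is bipartite with left part `L`. -/
def Bipartite (E : Finset (Sym2 V)) (L : Finset V) : Prop :=
  ∀ e ∈ E, ∃ u ∈ L, ∃ v, v ∉ L ∧ e = s(u, v)

/-- The alternating weight of a path with respect to the matching `M`: edges outside `M`
count positively and edges of `M` count negatively. -/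
def altWeight (W : Sym2 V → ℤ) (M : Finset (Sym2 V)) (l : List V) : ℤ :=
  ((pathEdges l).map fun e => if e ∈ M then -W e else W e).sum

/-- `l` is a minimum-alternating-weight augmenting path with respect to `M`. -/
def MinAugPath (W : Sym2 V → ℤ) (E M : Finset (Sym2 V)) (l : List V) : Prop :=
  IsAugPath E M l ∧ ∀ l', IsAugPath E M l' → altWeight W M l ≤ altWeight W M l'

open scoped symmDiff

section Paths

variable {α : Type*}

theorem length_pathEdges (l : List α) : (pathEdges l).length = l.length - 1 := by
  simp [pathEdges]

theorem getElem_pathEdges {l : List α} {i : ℕ} (h : i < (pathEdges l).length) :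
    (pathEdges l)[i] =
      s(l[i]'(by rw [length_pathEdges] at h; omega),
        l[i + 1]'(by rw [length_pathEdges] at h; omega)) := by
  simp [pathEdges]

theorem pathEdges_cons_cons (a b : α) (t : List α) :
    pathEdges (a :: b :: t) = s(a, b) :: pathEdges (b :: t) := rfl

theorem pathEdges_reverse (l : List α) : pathEdges l.reverse = (pathEdges l).reverse := by
  refine List.ext_getElem (by simp [length_pathEdges]) fun i h₁ h₂ => ?_
  simp only [getElem_pathEdges, List.getElem_reverse]
  rw [Sym2.eq_swap]
  have := length_pathEdges l
  simp only [List.length_reverse] at h₂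
  congr 2 <;> omega

theorem mem_of_mem_pathEdges {l : List α} {e : Sym2 α} {x : α} (he : e ∈ pathEdges l)
    (hx : x ∈ e) : x ∈ l := by
  obtain ⟨i, hi, rfl⟩ := List.getElem_of_mem he
  rw [getElem_pathEdges, Sym2.mem_iff] at hx
  rcases hx with rfl | rfl <;> exact List.getElem_mem _

theorem nodup_pathEdges {l : List α} (hl : l.Nodup) : (pathEdges l).Nodup := by
  refine List.nodup_iff_injective_get.2 ?_
  rintro ⟨i, hi⟩ ⟨j, hj⟩ hij
  simp only [List.get_eq_getElem, getElem_pathEdges, Sym2.eq_iff, hl.getElem_inj_iff] at hij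
  rw [Fin.mk.injEq]; omega

end Paths

section AugPath

variable {α : Type*} {E N : Finset (Sym2 α)} {l : List α} {x : α}

theorem IsAugPath.exists_pathEdge_notMem (h : IsAugPath E N l) (hx : x ∈ l) :
    ∃ e ∈ pathEdges l, e ∉ N ∧ x ∈ e := by
  obtain ⟨hlen, -, -, hodd, halt, -⟩ := h
  obtain ⟨i, hi, rfl⟩ := List.getElem_of_mem hx
  have hn := length_pathEdges l
  rcases Nat.mod_two_eq_zero_or_one i with hi2 | hi2
  · have hie : i < (pathEdges l).length := by omega
    refine ⟨_, List.getElem_mem hie, fun hN => ?_, ?_⟩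
    · have := (halt i hie).1 hN; omega
    · rw [getElem_pathEdges]; exact Sym2.mem_mk_left _ _
  · obtain ⟨j, rfl⟩ : ∃ j, i = j + 1 := ⟨i - 1, by omega⟩
    have hje : j < (pathEdges l).length := by omega
    refine ⟨_, List.getElem_mem hje, fun hN => ?_, ?_⟩
    · have := (halt j hje).1 hN; omega
    · rw [getElem_pathEdges]; exact Sym2.mem_mk_right _ _

theorem IsAugPath.exists_pathEdge_mem_or (h : IsAugPath E N l) (hx : x ∈ l) :
    (∃ e ∈ pathEdges l, e ∈ N ∧ x ∈ e) ∨ l.head? = some x ∨ l.getLast? = some x := by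
  obtain ⟨hlen, -, -, hodd, halt, -⟩ := h
  obtain ⟨i, hi, rfl⟩ := List.getElem_of_mem hx
  have hn := length_pathEdges l
  by_cases h0 : i = 0
  · subst h0; simp [List.head?_eq_getElem?]
  by_cases hlast : i = l.length - 1
  · subst hlast; simp [List.getLast?_eq_getElem?]
  left
  rcases Nat.mod_two_eq_zero_or_one i with hi2 | hi2
  · obtain ⟨j, rfl⟩ : ∃ j, i = j + 1 := ⟨i - 1, by omega⟩
    have hje : j < (pathEdges l).length := by omega
    refine ⟨_, List.getElem_mem hje, (halt j hje).2 (by omega), ?_⟩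
    rw [getElem_pathEdges]; exact Sym2.mem_mk_right _ _
  · have hie : i < (pathEdges l).length := by omega
    refine ⟨_, List.getElem_mem hie, (halt i hie).2 hi2, ?_⟩
    rw [getElem_pathEdges]; exact Sym2.mem_mk_left _ _

theorem IsAugPath.mem_pathEdges_of_mem (h : IsAugPath E N l) (hN : IsMatching E N)
    (hx : x ∈ l) {f : Sym2 α} (hf : f ∈ N) (hxf : x ∈ f) : f ∈ pathEdges l := by
  rcases h.exists_pathEdge_mem_or hx with ⟨e, he, heN, hxe⟩ | hhead | hlast
  · by_contra hfl
    exact hN.2 e heN f hf (fun hef => hfl (hef ▸ he)) x hxe hxf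
  all_goals obtain ⟨-, -, -, -, -, hends⟩ := h
  · exact ((hends f hf).1 x hhead hxf).elim
  · exact ((hends f hf).2 x hlast hxf).elim

theorem IsAugPath.isMatching_sdiff [DecidableEq α] (h : IsAugPath E N l) :
    IsMatching E ((pathEdges l).toFinset \ N) := by
  obtain ⟨-, hnd, hE, -, halt, -⟩ := h
  refine ⟨fun e he => hE e (List.mem_toFinset.1 (Finset.mem_sdiff.1 he).1), ?_⟩
  simp only [Finset.mem_sdiff, List.mem_toFinset]
  rintro _ ⟨he, heN⟩ _ ⟨hf, hfN⟩ hne x hxe hxf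
  obtain ⟨i, hi, rfl⟩ := List.getElem_of_mem he
  obtain ⟨j, hj, rfl⟩ := List.getElem_of_mem hf
  have hi2 := (halt i hi).not.1 heN
  have hj2 := (halt j hj).not.1 hfN
  have hij : i ≠ j := by rintro rfl; exact hne rfl
  rw [getElem_pathEdges, Sym2.mem_iff] at hxe hxf
  rcases hxe with rfl | rfl <;> rcases hxf with h' | h' <;>
    rw [hnd.getElem_inj_iff] at h' <;> omega

theorem isAugPath_pair {u v : α} (huv : s(u, v) ∈ E) (hne : u ≠ v) (hu : ∀ e ∈ N, u ∉ e)
    (hv : ∀ e ∈ N, v ∉ e) : IsAugPath E N [u, v] := by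
  refine ⟨le_rfl, by simp [hne], by simp [pathEdges, huv], rfl, fun i hi => ?_, fun e he => ?_⟩
  · obtain rfl : i = 0 := by simpa [pathEdges] using hi
    simpa [pathEdges] using fun h => hu _ h (Sym2.mem_mk_left u v)
  · simpa using ⟨hu e he, hv e he⟩

theorem IsAugPath.reverse (h : IsAugPath E N l) : IsAugPath E N l.reverse := by
  obtain ⟨hlen, hnd, hE, hodd, halt, hends⟩ := h
  refine ⟨by simpa using hlen, List.nodup_reverse.2 hnd, by simpa [pathEdges_reverse] using hE,
    by simpa [pathEdges_reverse] using hodd, fun i hi => ?_, fun e he => ?_⟩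
  · simp only [pathEdges_reverse, List.getElem_reverse]
    simp only [pathEdges_reverse, List.length_reverse] at hi
    rw [halt]
    omega
  · simpa [List.head?_reverse, List.getLast?_reverse] using (hends e he).symm

end AugPath

section Matching

variable {α : Type*} {E A B : Finset (Sym2 α)}

theorem Bipartite.not_isDiag {L : Finset α} (h : Bipartite E L) : ∀ e ∈ E, ¬ e.IsDiag := by
  intro e he hdiag
  obtain ⟨u, hu, v, hv, rfl⟩ := h e he
  exact hv (Sym2.mk_isDiag_iff.1 hdiag ▸ hu)

theorem IsMatching.mono (hA : IsMatching E A) (hBA : B ⊆ A) : IsMatching E B :=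
  ⟨hBA.trans hA.1, fun e he f hf => hA.2 e (hBA he) f (hBA hf)⟩

variable [DecidableEq α]

theorem IsMatching.union (hA : IsMatching E A) (hB : IsMatching E B)
    (hAB : ∀ e ∈ A, ∀ f ∈ B, ∀ x ∈ e, x ∉ f) : IsMatching E (A ∪ B) := by
  refine ⟨Finset.union_subset hA.1 hB.1, ?_⟩
  simp only [Finset.mem_union]
  rintro e (he | he) f (hf | hf) hne x hxe hxf
  exacts [hA.2 e he f hf hne x hxe hxf, hAB e he f hf x hxe hxf, hAB f hf e he x hxf hxe,
    hB.2 e he f hf hne x hxe hxf]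

theorem IsMatching.card_biUnion_toFinset (hE : ∀ e ∈ E, ¬ e.IsDiag) (hA : IsMatching E A) :
    (A.biUnion Sym2.toFinset).card = 2 * A.card := by
  rw [Finset.card_biUnion, Finset.sum_congr rfl fun e he =>
      Sym2.card_toFinset_of_not_isDiag e (hE e (hA.1 he)), Finset.sum_const, smul_eq_mul,
    mul_comm]
  intro e he f hf hne
  exact Finset.disjoint_left.2 fun x hxe hxf =>
    hA.2 e he f hf hne x (Sym2.mem_toFinset.1 hxe) (Sym2.mem_toFinset.1 hxf)

theorem exists_mem_forall_notMem_of_card_lt (hE : ∀ e ∈ E, ¬ e.IsDiag) (hA : IsMatching E A)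
    (hB : IsMatching E B) (hlt : B.card < A.card) :
    ∃ e ∈ A, ∃ x ∈ e, ∀ f ∈ B, x ∉ f := by
  by_contra! hcover
  have hsub : A.biUnion Sym2.toFinset ⊆ B.biUnion Sym2.toFinset := by
    intro x hx
    obtain ⟨e, he, hxe⟩ := Finset.mem_biUnion.1 hx
    obtain ⟨f, hf, hxf⟩ := hcover e he x (Sym2.mem_toFinset.1 hxe)
    exact Finset.mem_biUnion.2 ⟨f, hf, Sym2.mem_toFinset.2 hxf⟩
  have := Finset.card_le_card hsub
  rw [hA.card_biUnion_toFinset hE, hB.card_biUnion_toFinset hE] at this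
  omega

end Matching

section Weights

variable {α : Type*} {E N A B P : Finset (Sym2 α)} {l : List α}

theorem wt_one (F : Finset (Sym2 α)) : wt (fun _ => 1) F = F.card :=
  (Finset.cast_card F).symm

variable [DecidableEq α]

theorem wt_symmDiff (W : Sym2 α → ℤ) (A P : Finset (Sym2 α)) :
    wt W (A ∆ P) = wt W A + wt W (P \ A) - wt W (P ∩ A) := by
  rw [wt, wt, wt, wt, Finset.symmDiff_def, Finset.sum_union disjoint_sdiff_sdiff,
    ← Finset.sum_inter_add_sum_sdiff A P, Finset.inter_comm]
  ring

theorem wt_symmDiff_add_wt_symmDiff (W : Sym2 α → ℤ) (hP : P ⊆ A ∆ B) :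
    wt W (A ∆ P) + wt W (B ∆ P) = wt W A + wt W B := by
  have hPA : P \ A = P ∩ B := by
    ext e
    have := @hP e
    simp only [Finset.mem_symmDiff, Finset.mem_sdiff, Finset.mem_inter] at this ⊢
    tauto
  have hPB : P ∩ A = P \ B := by
    ext e
    have := @hP e
    simp only [Finset.mem_symmDiff, Finset.mem_sdiff, Finset.mem_inter] at this ⊢
    tauto
  rw [wt_symmDiff, wt_symmDiff, hPA, hPB]
  ring

theorem altWeight_eq_wt_sdiff_sub_wt_inter (W : Sym2 α → ℤ) (N : Finset (Sym2 α))
    (hl : (pathEdges l).Nodup) :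
    altWeight W N l = wt W ((pathEdges l).toFinset \ N) - wt W ((pathEdges l).toFinset ∩ N) := by
  rw [altWeight, ← List.sum_toFinset _ hl, Finset.sum_ite, Finset.filter_mem_eq_inter,
    Finset.filter_notMem_eq_sdiff, Finset.sum_neg_distrib, wt, wt]
  ring

theorem IsAugPath.altWeight_one (h : IsAugPath E N l) : altWeight (fun _ => 1) N l = 1 := by
  obtain ⟨-, -, -, hodd, halt, -⟩ := h
  have hsign : ∀ i (hi : i < (pathEdges l).length),
      (if (pathEdges l)[i] ∈ N then -(1 : ℤ) else 1) = (-1) ^ i := by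
    intro i hi
    by_cases hi2 : i % 2 = 1
    · rw [if_pos ((halt i hi).2 hi2), Odd.neg_one_pow (Nat.odd_iff.2 hi2)]
    · rw [if_neg ((halt i hi).not.2 hi2), Even.neg_one_pow (Nat.even_iff.2 (by omega))]
  have hsum : ∀ j : ℕ, ∑ i ∈ Finset.range (2 * j + 1), (-1 : ℤ) ^ i = 1 := by
    intro j
    induction j with
    | zero => simp
    | succ j ih =>
      rw [show 2 * (j + 1) + 1 = 2 * j + 1 + 1 + 1 by ring, Finset.sum_range_succ,
        Finset.sum_range_succ, ih]
      simp [pow_succ, pow_mul]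
  calc altWeight (fun _ => 1) N l
      = ∑ i : Fin (pathEdges l).length, (-1 : ℤ) ^ (i : ℕ) := by
        rw [altWeight, ← List.ofFn_getElem_eq_map, List.sum_ofFn]
        exact Fintype.sum_congr _ _ fun i => hsign i i.2
    _ = ∑ i ∈ Finset.range (2 * ((pathEdges l).length / 2) + 1), (-1 : ℤ) ^ i := by
        rw [Fin.sum_univ_eq_sum_range (fun i => (-1 : ℤ) ^ i)]
        congr 2
        omega
    _ = 1 := hsum _

theorem IsAugPath.wt_symmDiff (h : IsAugPath E N l) (W : Sym2 α → ℤ) :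
    wt W (N ∆ (pathEdges l).toFinset) = wt W N + altWeight W N l := by
  rw [_root_.wt_symmDiff, altWeight_eq_wt_sdiff_sub_wt_inter W N (nodup_pathEdges h.2.1)]
  ring

theorem IsAugPath.card_symmDiff (h : IsAugPath E N l) :
    (N ∆ (pathEdges l).toFinset).card = N.card + 1 := by
  have := h.wt_symmDiff fun _ => 1
  rw [h.altWeight_one, wt_one, wt_one] at this
  exact_mod_cast this

end Weights

section Augmentation

variable {α : Type*} [DecidableEq α] {E N M : Finset (Sym2 α)} {l : List α}

theorem IsAugPath.isMatching_symmDiff (h : IsAugPath E N l) (hN : IsMatching E N) :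
    IsMatching E (N ∆ (pathEdges l).toFinset) := by
  rw [Finset.symmDiff_def]
  refine (hN.mono Finset.sdiff_subset).union h.isMatching_sdiff fun e he f hf x hxe hxf => ?_
  simp only [Finset.mem_sdiff, List.mem_toFinset] at he hf
  exact he.2 (h.mem_pathEdges_of_mem hN (mem_of_mem_pathEdges hf.1 hxf) he.1 hxe)

theorem IsAugPath.isMatching_symmDiff_of_subset (h : IsAugPath E N l) (hM : IsMatching E M)
    (hN : IsMatching E N) (hP : (pathEdges l).toFinset ⊆ M ∆ N) :
    IsMatching E (M ∆ (pathEdges l).toFinset) := by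
  rw [Finset.symmDiff_def]
  refine (hM.mono Finset.sdiff_subset).union (hN.mono fun e he => ?_) fun e he f hf x hxe hxf => ?_
  · obtain ⟨heP, heM⟩ := Finset.mem_sdiff.1 he
    have := hP heP
    simp only [Finset.mem_symmDiff] at this
    tauto
  · simp only [Finset.mem_sdiff, List.mem_toFinset] at he hf
    obtain ⟨g, hg, hgN, hxg⟩ := h.exists_pathEdge_notMem (mem_of_mem_pathEdges hf.1 hxf)
    have hgM : g ∈ M := by
      have := hP (List.mem_toFinset.2 hg)
      simp only [Finset.mem_symmDiff] at this
      tauto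
    exact hM.2 e he.1 g hgM (fun heg => he.2 (heg ▸ hg)) x hxe hxg

theorem IsAugPath.of_erase {f : Sym2 α} (h : IsAugPath E (N.erase f) l)
    (hf : ∀ x ∈ l, x ∉ f) : IsAugPath E N l := by
  obtain ⟨hlen, hnd, hE, hodd, halt, hends⟩ := h
  have hne : ∀ e ∈ pathEdges l, e ≠ f := fun e he hef =>
    hf _ (mem_of_mem_pathEdges he (Sym2.out_fst_mem e)) (hef ▸ Sym2.out_fst_mem e)
  refine ⟨hlen, hnd, hE, hodd, fun i hi => ?_, fun e he => ?_⟩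
  · rw [← halt i hi, Finset.mem_erase, and_iff_right (hne _ (List.getElem_mem hi))]
  · by_cases hef : e = f
    · subst hef
      exact ⟨fun x hx => hf x (List.mem_of_mem_head? hx),
        fun x hx => hf x (List.mem_of_mem_getLast? hx)⟩
    · exact hends e (Finset.mem_erase.2 ⟨hef, he⟩)

theorem IsAugPath.cons_cons {u v w : α} {t : List α} (h : IsAugPath E (N.erase s(v, w)) (w :: t))
    (hNE : N ⊆ E) (hvw : s(v, w) ∈ N) (huv : s(u, v) ∈ E) (hu : ∀ e ∈ N, u ∉ e)
    (hul : u ∉ w :: t) (hvl : v ∉ w :: t) : IsAugPath E N (u :: v :: w :: t) := by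
  obtain ⟨hlen, hnd, hE, hodd, halt, hends⟩ := h
  have hne : u ≠ v := fun h => hu _ hvw (h ▸ Sym2.mem_mk_left v w)
  have hsame : ∀ e ∈ pathEdges (w :: t), e ∈ N.erase s(v, w) ↔ e ∈ N := fun e he =>
    ⟨Finset.mem_of_mem_erase, fun heN => Finset.mem_erase.2
      ⟨fun hev => hvl (mem_of_mem_pathEdges he (hev ▸ Sym2.mem_mk_left v w)), heN⟩⟩
  refine ⟨by simp, ?_, ?_, ?_, ?_, fun e he => ⟨?_, ?_⟩⟩
  · exact List.nodup_cons.2 ⟨by simp_all, List.nodup_cons.2 ⟨hvl, hnd⟩⟩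
  · simp only [pathEdges_cons_cons, List.mem_cons]
    rintro e (rfl | rfl | he)
    exacts [huv, hNE hvw, hE e he]
  · simp only [pathEdges_cons_cons, List.length_cons] at hodd ⊢
    omega
  · intro i hi
    match i with
    | 0 => simpa [pathEdges_cons_cons] using fun h => hu _ h (Sym2.mem_mk_left u v)
    | 1 => simpa [pathEdges_cons_cons] using hvw
    | i + 2 =>
      simp only [pathEdges_cons_cons, List.getElem_cons_succ]
      rw [← hsame _ (List.getElem_mem _), halt]
      omega
  · simpa using hu e he
  · obtain ⟨b, t', rfl⟩ :=
      List.exists_cons_of_ne_nil (show t ≠ [] by rintro rfl; simp at hlen)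
    intro x hx hxe
    rw [List.getLast?_cons_cons, List.getLast?_cons_cons, List.getLast?_cons_cons] at hx
    have hxt := List.mem_of_mem_getLast? hx
    by_cases hev : e = s(v, w)
    · subst hev
      rcases Sym2.mem_iff.1 hxe with rfl | rfl
      · exact hvl (List.mem_cons_of_mem _ hxt)
      · exact (List.nodup_cons.1 hnd).1 hxt
    · exact (hends e (Finset.mem_erase.2 ⟨hev, he⟩)).2 x
        (by rwa [List.getLast?_cons_cons]) hxe

/-- The inductive step of `exists_isAugPath_subset_symmDiff`. The path `l` avoids `u` and `v`;
if it meets `w`, then `w`, being uncovered by `N.erase s(v, w)`, is an endpoint of `l`, and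
prefixing `u, v` gives the required path. -/
theorem exists_isAugPath_of_erase {u v w : α} (hM : IsMatching E M) (hN : IsMatching E N)
    (huv : s(u, v) ∈ M) (hvw : s(v, w) ∈ N) (hu : ∀ e ∈ N, u ∉ e)
    (hl : IsAugPath E (N.erase s(v, w)) l)
    (hlP : (pathEdges l).toFinset ⊆ M.erase s(u, v) ∆ N.erase s(v, w)) :
    ∃ l', IsAugPath E N l' ∧ (pathEdges l').toFinset ⊆ M ∆ N := by
  wlog hwl : w ∈ l → l.head? = some w generalizing l
  · push Not at hwl
    obtain ⟨hw, hhead⟩ := hwl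
    refine this hl.reverse (by simpa [pathEdges_reverse] using hlP) fun _ => ?_
    rw [List.head?_reverse]
    rcases hl.exists_pathEdge_mem_or hw with ⟨e, -, heN, hwe⟩ | h | h
    · exact (hN.2 e (Finset.mem_of_mem_erase heN) _ hvw (Finset.ne_of_mem_erase heN) w hwe
        (Sym2.mem_mk_right v w)).elim
    · exact (hhead h).elim
    · exact h
  have huvN : s(u, v) ∉ N := fun h => hu _ h (Sym2.mem_mk_left u v)
  have hvwM : s(v, w) ∉ M := fun h => hM.2 _ huv _ h (fun heq => huvN (heq ▸ hvw)) v
    (Sym2.mem_mk_right u v) (Sym2.mem_mk_left v w)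
  have hoff : ∀ x ∈ l, x ∉ s(u, v) := by
    intro x hx hxe
    obtain ⟨g, hg, hgN, hxg⟩ := hl.exists_pathEdge_notMem hx
    have hgM : g ∈ M.erase s(u, v) := by
      have := hlP (List.mem_toFinset.2 hg)
      simp only [Finset.mem_symmDiff] at this
      tauto
    exact hM.2 g (Finset.mem_of_mem_erase hgM) _ huv (Finset.ne_of_mem_erase hgM) x hxg hxe
  have hP : (pathEdges l).toFinset ⊆ M ∆ N := by
    intro g hg
    have hvg : v ∉ g := fun hvg =>
      hoff v (mem_of_mem_pathEdges (List.mem_toFinset.1 hg) hvg) (Sym2.mem_mk_right u v)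
    have h₁ : g ≠ s(u, v) := by rintro rfl; exact hvg (Sym2.mem_mk_right u v)
    have h₂ : g ≠ s(v, w) := by rintro rfl; exact hvg (Sym2.mem_mk_left v w)
    simpa only [Finset.mem_symmDiff, Finset.mem_erase, h₁, h₂, ne_eq, not_false_eq_true,
      true_and] using hlP hg
  by_cases hw : w ∈ l
  · obtain ⟨t, rfl⟩ := List.head?_eq_some_iff.1 (hwl hw)
    refine ⟨u :: v :: w :: t, hl.cons_cons hN.1 hvw (hM.1 huv) hu
      (fun h => hoff u h (Sym2.mem_mk_left u v)) (fun h => hoff v h (Sym2.mem_mk_right u v)), ?_⟩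
    simp only [pathEdges_cons_cons, List.toFinset_cons, Finset.insert_subset_iff]
    exact ⟨by simp [Finset.mem_symmDiff, huv, huvN], by simp [Finset.mem_symmDiff, hvw, hvwM],
      hP⟩
  · refine ⟨l, hl.of_erase fun x hx hxf => ?_, hP⟩
    rcases Sym2.mem_iff.1 hxf with rfl | rfl
    · exact hoff x hx (Sym2.mem_mk_right u x)
    · exact hw hx

theorem exists_isAugPath_subset_symmDiff (hE : ∀ e ∈ E, ¬ e.IsDiag) (hM : IsMatching E M)
    (hN : IsMatching E N) (hlt : N.card < M.card) :
    ∃ l, IsAugPath E N l ∧ (pathEdges l).toFinset ⊆ M ∆ N := by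
  induction hn : N.card using Nat.strong_induction_on generalizing M N with
  | _ n ih =>
  obtain ⟨e₀, he₀, u, hue₀, hu⟩ := exists_mem_forall_notMem_of_card_lt hE hM hN hlt
  obtain ⟨v, rfl⟩ := Sym2.mem_iff_exists.1 hue₀
  by_cases hv : ∀ f ∈ N, v ∉ f
  · have huv : u ≠ v := fun h => hE _ (hM.1 he₀) (Sym2.mk_isDiag_iff.2 h)
    have he₀N : s(u, v) ∉ N := fun h => hu _ h (Sym2.mem_mk_left u v)
    refine ⟨[u, v], isAugPath_pair (hM.1 he₀) huv hu hv, ?_⟩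
    simp [pathEdges, Finset.mem_symmDiff, he₀, he₀N]
  push Not at hv
  obtain ⟨f, hf, hvf⟩ := hv
  obtain ⟨w, rfl⟩ := Sym2.mem_iff_exists.1 hvf
  have hNpos := Finset.card_pos.2 ⟨_, hf⟩
  obtain ⟨l, hl, hlP⟩ := ih _ (by rw [Finset.card_erase_of_mem hf]; omega)
    (hM.mono (Finset.erase_subset _ _)) (hN.mono (Finset.erase_subset _ _))
    (by rw [Finset.card_erase_of_mem hf, Finset.card_erase_of_mem he₀]; omega) rfl
  exact exists_isAugPath_of_erase hM hN he₀ hf hu hl hlP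

end Augmentation

section Isolation

variable {α : Type*} [DecidableEq α] {E Mk M : Finset (Sym2 α)} {W : Sym2 α → ℤ} {k : ℕ}

theorem Isolates.exists_isAugPath_eq_symmDiff_or_wt_lt (hMk : Isolates W E k Mk)
    (hE : ∀ e ∈ E, ¬ e.IsDiag) (hM : IsMatching E M) (hcard : M.card = k + 1) :
    ∃ l, IsAugPath E Mk l ∧
      (M = Mk ∆ (pathEdges l).toFinset ∨ wt W (Mk ∆ (pathEdges l).toFinset) < wt W M) := by
  obtain ⟨hMkm, hk, hmin⟩ := hMk
  obtain ⟨l, hl, hP⟩ := exists_isAugPath_subset_symmDiff hE hM hMkm (by omega)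
  refine ⟨l, hl, ?_⟩
  by_cases hMP : M ∆ (pathEdges l).toFinset = Mk
  · left
    rw [← hMP, symmDiff_symmDiff_cancel_right]
  · right
    have hcardMP : (M ∆ (pathEdges l).toFinset).card = k := by
      have := wt_symmDiff_add_wt_symmDiff (fun _ => 1) hP
      rw [wt_one, wt_one, wt_one, wt_one, hl.card_symmDiff] at this
      omega
    have hlt := hmin _ (hl.isMatching_symmDiff_of_subset hM hMkm hP) hcardMP hMP
    linarith [wt_symmDiff_add_wt_symmDiff W hP]

theorem Isolates.minOfSize_iff (hMk : Isolates W E k Mk) (hE : ∀ e ∈ E, ¬ e.IsDiag) :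
    MinOfSize W E (k + 1) M ↔
      ∃ l, MinAugPath W E Mk l ∧ M = Mk ∆ (pathEdges l).toFinset := by
  have hsize : ∀ {l}, IsAugPath E Mk l → (Mk ∆ (pathEdges l).toFinset).card = k + 1 := by
    intro l hl
    rw [hl.card_symmDiff, hMk.2.1]
  constructor
  · rintro ⟨hM, hcard, hmin⟩
    obtain ⟨l, hl, rfl | hlt⟩ := hMk.exists_isAugPath_eq_symmDiff_or_wt_lt hE hM hcard
    · refine ⟨l, ⟨hl, fun l' hl' => ?_⟩, rfl⟩
      have := hmin _ (hl'.isMatching_symmDiff hMk.1) (hsize hl')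
      rw [hl.wt_symmDiff, hl'.wt_symmDiff] at this
      linarith
    · exact absurd (hmin _ (hl.isMatching_symmDiff hMk.1) (hsize hl)) hlt.not_ge
  · rintro ⟨l, ⟨hl, hmin⟩, rfl⟩
    refine ⟨hl.isMatching_symmDiff hMk.1, hsize hl, fun M' hM' hcard' => ?_⟩
    obtain ⟨l', hl', hM'l'⟩ := hMk.exists_isAugPath_eq_symmDiff_or_wt_lt hE hM' hcard'
    have hle : wt W (Mk ∆ (pathEdges l).toFinset) ≤ wt W (Mk ∆ (pathEdges l').toFinset) := by
      rw [hl.wt_symmDiff, hl'.wt_symmDiff]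
      linarith [hmin l' hl']
    rcases hM'l' with rfl | hlt
    exacts [hle, hle.trans hlt.le]

end Isolation

theorem isolation_iff_unique_min_augPath_general (E : Finset (Sym2 V)) (L : Finset V)
    (hbip : Bipartite E L) (W : Sym2 V → ℤ) (k : ℕ) (Mk : Finset (Sym2 V))
    (hMk : Isolates W E k Mk) :
    (∃ M, MinOfSize W E (k + 1) M ∧ ∀ M', MinOfSize W E (k + 1) M' → M' = M) ↔
      (∃ l, MinAugPath W E Mk l ∧
        ∀ l', MinAugPath W E Mk l' →
          (pathEdges l').toFinset = (pathEdges l).toFinset) := by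
  have key M := hMk.minOfSize_iff hbip.not_isDiag (M := M)
  constructor
  · rintro ⟨M, hM, huniq⟩
    obtain ⟨l, hl, rfl⟩ := (key M).1 hM
    exact ⟨l, hl, fun l' hl' =>
      symmDiff_right_injective Mk (huniq _ ((key _).2 ⟨l', hl', rfl⟩))⟩
  · rintro ⟨l, hl, huniq⟩
    refine ⟨_, (key _).2 ⟨l, hl, rfl⟩, fun M' hM' => ?_⟩
    obtain ⟨l', hl', rfl⟩ := (key M').1 hM'
    rw [huniq l' hl']

/-- Suppose `W` isolates the minimum-weight size-`k` matching `Mk` of a bipartite graph and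
a matching of size `k+1` exists. Then `W` isolates a matching of size `k+1` (there is a
unique minimum-weight matching of size `k+1`) if and only if there is a unique
minimum-alternating-weight augmenting path with respect to `Mk` (unique as a set of edges). -/
theorem isolation_iff_unique_min_augPath (E : Finset (Sym2 V)) (L : Finset V)
    (hbip : Bipartite E L) (W : Sym2 V → ℤ) (k : ℕ) (Mk : Finset (Sym2 V))
    (hMk : Isolates W E k Mk)
    (hex : ∃ M, IsMatching E M ∧ M.card = k + 1) :
    (∃ M, MinOfSize W E (k + 1) M ∧ ∀ M', MinOfSize W E (k + 1) M' → M' = M) ↔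
      (∃ l, MinAugPath W E Mk l ∧
        ∀ l', MinAugPath W E Mk l' →
          (pathEdges l').toFinset = (pathEdges l).toFinset) :=
  isolation_iff_unique_min_augPath_general E L hbip W k Mk hMk
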